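/- arXiv:1607.07072 — 2 statements merged into one kernel-verified Lean document; each statement's English description precedes it below -/
import Mathlib

section
/- For the Abel equation z' = f₂ z² + f₃ z³ with constant f₂ = −(3+4/p) and f₃(w) = 2(1+1/p)(1+2/p)(w − w^{2−1/(p+1)}), the Abel invariant Φ_p(w) = (1/3)(f₃ f₂' − f₂ f₃') + (2/27) f₂³ equals (2(3p+4)/(27p³)) [(3p+2) − 9(p+2)(2p+1) w^{p/(p+1)}]. -/
theorem hasDerivAt_id_sub_rpow_const {r : ℝ} (hr : 1 ≤ r) (x : ℝ) :
    HasDerivAt (fun x : ℝ => x - x ^ r) (1 - r * x ^ (r - 1)) x :=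
  (hasDerivAt_id x).sub (Real.hasDerivAt_rpow_const (Or.inr hr))

theorem stmt10_general (p : ℝ) (hp : 0 < p) (w : ℝ) :
    (1 / 3) *
        ((2 * (1 + 1 / p) * (1 + 2 / p) * (w - w ^ (2 - 1 / (p + 1)))) *
            deriv (fun _ : ℝ => -(3 + 4 / p)) w -
          (-(3 + 4 / p)) *
            deriv (fun w : ℝ =>
              2 * (1 + 1 / p) * (1 + 2 / p) * (w - w ^ (2 - 1 / (p + 1)))) w) +
      (2 / 27) * (-(3 + 4 / p)) ^ 3 =
    (2 * (3 * p + 4) / (27 * p ^ 3)) *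
      ((3 * p + 2) - 9 * (p + 2) * (2 * p + 1) * w ^ (p / (p + 1))) := by
  have hp1 : p + 1 ≠ 0 := by positivity
  have hexp_ge : 1 ≤ 2 - 1 / (p + 1) := by
    have : 1 / (p + 1) ≤ 1 := (div_le_one (by positivity)).mpr (by linarith)
    linarith
  have hexp : 2 - 1 / (p + 1) - 1 = p / (p + 1) := by field_simp; ring
  rw [deriv_const, ((hasDerivAt_id_sub_rpow_const hexp_ge w).const_mul _).deriv, hexp]
  field_simp
  ring

/-- For the Abel equation `z' = f₂ z² + f₃ z³` with constant
`f₂ = −(3+4/p)` and `f₃(w) = 2(1+1/p)(1+2/p)(w − w^(2−1/(p+1)))`, the Abel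
invariant `Φ_p = (1/3)(f₃ f₂' − f₂ f₃') + (2/27) f₂³` equals
`(2(3p+4)/(27p³)) [(3p+2) − 9(p+2)(2p+1) w^(p/(p+1))]`. -/
theorem stmt10 (p : ℝ) (hp : 0 < p) (w : ℝ) (hw : 0 < w) :
    (1 / 3) *
        ((2 * (1 + 1 / p) * (1 + 2 / p) * (w - w ^ (2 - 1 / (p + 1)))) *
            deriv (fun _ : ℝ => -(3 + 4 / p)) w -
          (-(3 + 4 / p)) *
            deriv (fun w : ℝ =>
              2 * (1 + 1 / p) * (1 + 2 / p) * (w - w ^ (2 - 1 / (p + 1)))) w) +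
      (2 / 27) * (-(3 + 4 / p)) ^ 3 =
    (2 * (3 * p + 4) / (27 * p ^ 3)) *
      ((3 * p + 2) - 9 * (p + 2) * (2 * p + 1) * w ^ (p / (p + 1))) :=
  stmt10_general p hp w
end

section
/- There is no real constant α such that 3807 √w + 11664 w + 14^{2/3} (5 − 81√w)^{5/3} α = 195 holds for all w in some open interval of (0, ∞). -/
/-!
Substituting `t = √w` turns the identity into
`195 - 3807 t - 11664 t² = c (5 - 81 t)^(5/3)` with `c = 14^(2/3) α`, on an open interval of `t`.
Shrinking the interval so that `5 - 81 t` has constant sign and cubing, the polynomial identity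
`(195 - 3807 t - 11664 t²)³ = K (5 - 81 t)⁵` holds on an interval for a constant `K`, hence
everywhere; at `t = 5/81` the right side vanishes but the left side does not.
-/

open Real Set Polynomial

lemma rpow_div_three_pow_three_of_nonneg {x : ℝ} (hx : 0 ≤ x) (n : ℕ) :
    (x ^ ((n : ℝ) / 3)) ^ 3 = x ^ n := by
  rw [← rpow_mul_natCast hx, ← rpow_natCast]
  congr 1
  push_cast
  ring

lemma rpow_div_three_pow_three_of_neg {x : ℝ} (hx : x < 0) (n : ℕ) :
    (x ^ ((n : ℝ) / 3)) ^ 3 = cos (n / 3 * π) ^ 3 * (-x) ^ n := by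
  have hx' : 0 < -x := neg_pos.mpr hx
  rw [← rpow_div_three_pow_three_of_nonneg hx'.le, rpow_def_of_neg hx, rpow_def_of_pos hx',
    log_neg_eq_log]
  ring

lemma sq_mem_Ioo_of_mem_Ioo_sqrt {a b t : ℝ} (ht : t ∈ Ioo (√a) (√b)) :
    t ^ 2 ∈ Ioo a b := by
  have ht0 : 0 ≤ t := (sqrt_nonneg a).trans ht.1.le
  exact ⟨(sqrt_lt' ((sqrt_nonneg a).trans_lt ht.1)).mp ht.1, (lt_sqrt ht0).mp ht.2⟩

lemma Polynomial.eq_of_eval_eq_on_Ioo {p q : ℝ[X]} {s e : ℝ} (hse : s < e)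
    (h : ∀ t ∈ Ioo s e, p.eval t = q.eval t) : p = q :=
  eq_of_infinite_eval_eq p q ((Ioo_infinite hse).mono h)

lemma not_forall_Ioo_cube_eq_mul_pow_five (K : ℝ) {s e : ℝ} (hse : s < e) :
    ¬ ∀ t ∈ Ioo s e, (195 - 3807 * t - 11664 * t ^ 2) ^ 3 = K * (5 - 81 * t) ^ 5 := by
  intro h
  have hpoly : (C 195 - C 3807 * X - C 11664 * X ^ 2) ^ 3 = C K * (C 5 - C 81 * X) ^ 5 :=
    eq_of_eval_eq_on_Ioo hse fun t ht => by simpa using h t ht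
  have := congrArg (eval (5 / 81 : ℝ)) hpoly
  norm_num at this

/-- There is no real constant `α` such that
`3807 √w + 11664 w + 14^(2/3) (5 − 81√w)^(5/3) α = 195`
holds for all `w` in some nonempty open subinterval of `(0,∞)`. -/
theorem stmt12 :
    ¬ ∃ (α a b : ℝ), 0 ≤ a ∧ a < b ∧
      ∀ w ∈ Set.Ioo a b,
        3807 * Real.sqrt w + 11664 * w +
          (14 : ℝ) ^ ((2 : ℝ) / 3) *
            (5 - 81 * Real.sqrt w) ^ ((5 : ℝ) / 3) * α = 195 := by
  rintro ⟨α, a, b, ha, hab, h⟩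
  set c := (14 : ℝ) ^ ((2 : ℝ) / 3) * α
  have hsqrt : √a < √b := sqrt_lt_sqrt ha hab
  have hsubst : ∀ t ∈ Ioo (√a) (√b),
      (195 - 3807 * t - 11664 * t ^ 2) ^ 3 = c ^ 3 * ((5 - 81 * t) ^ ((5 : ℕ) / 3 : ℝ)) ^ 3 := by
    intro t ht
    have hw := h (t ^ 2) (sq_mem_Ioo_of_mem_Ioo_sqrt ht)
    rw [sqrt_sq ((sqrt_nonneg a).trans ht.1.le)] at hw
    rw [← hw]
    push_cast
    ring
  rcases lt_or_ge (√a) (5 / 81) with hpos | hneg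
  · refine not_forall_Ioo_cube_eq_mul_pow_five (c ^ 3) (lt_min hsqrt hpos) fun t ht => ?_
    have ht81 : 0 ≤ 5 - 81 * t := by linarith [ht.2.trans_le (min_le_right _ _)]
    rw [hsubst t ⟨ht.1, ht.2.trans_le (min_le_left _ _)⟩,
      rpow_div_three_pow_three_of_nonneg ht81]
  · refine not_forall_Ioo_cube_eq_mul_pow_five (-(c ^ 3 * cos (5 / 3 * π) ^ 3)) hsqrt
      fun t ht => ?_
    have ht81 : 5 - 81 * t < 0 := by linarith [ht.1]
    rw [hsubst t ht, rpow_div_three_pow_three_of_neg ht81]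
    push_cast
    ring
end
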